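/- arXiv:2301.09246 — 4 statements merged into one kernel-verified Lean document; each statement's English description precedes it below -/
import Mathlib

section
/- In any partition of the edge set of K_{2,2,2} into four triangles, every two distinct triangles of the partition share exactly one vertex. -/
/-- The complete tripartite graph `K_{2,2,2}` (the octahedron graph): the simple graph
on `Fin 3 × Fin 2` in which two vertices are adjacent iff their first coordinates
differ. -/
def K222 : SimpleGraph (Fin 3 × Fin 2) where
  Adj p q := p.1 ≠ q.1
  symm := ⟨fun _ _ h => Ne.symm h⟩
  loopless := ⟨fun _ h => h rfl⟩

/-- A triangle in `K_{2,2,2}`: a 3-element set of pairwise adjacent vertices. -/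
def IsTriangle (s : Finset (Fin 3 × Fin 2)) : Prop :=
  s.card = 3 ∧ ∀ x ∈ s, ∀ y ∈ s, x ≠ y → K222.Adj x y

/-- The edge set of a triangle: the edges between its vertices. -/
def triEdges (s : Finset (Fin 3 × Fin 2)) : Set (Sym2 (Fin 3 × Fin 2)) :=
  {e | ∃ x ∈ s, ∃ y ∈ s, x ≠ y ∧ e = s(x, y)}

instance : DecidableRel K222.Adj := fun p q => inferInstanceAs (Decidable (p.1 ≠ q.1))

instance : DecidablePred IsTriangle := fun s =>
  inferInstanceAs (Decidable (s.card = 3 ∧ ∀ x ∈ s, ∀ y ∈ s, x ≠ y → K222.Adj x y))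

/-- Parametrize triangles of `K222` by a choice of vertex in each part. -/
def tri (v : Fin 2 × Fin 2 × Fin 2) : Finset (Fin 3 × Fin 2) :=
  {(0, v.1), (1, v.2.1), (2, v.2.2)}

/-- The vertex of the triangle `tri v` in part `p`. -/
def coord (v : Fin 2 × Fin 2 × Fin 2) (p : Fin 3) : Fin 2 :=
  ![v.1, v.2.1, v.2.2] p

/-- The number of parts in which two parametrized triangles agree. -/
def agree (a b : Fin 2 × Fin 2 × Fin 2) : ℕ :=
  (if a.1 = b.1 then 1 else 0) + (if a.2.1 = b.2.1 then 1 else 0)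
    + (if a.2.2 = b.2.2 then 1 else 0)

lemma classify : ∀ s : Finset (Fin 3 × Fin 2), IsTriangle s → ∃ v, s = tri v := by decide

lemma mem_tri : ∀ (v : Fin 2 × Fin 2 × Fin 2) (z : Fin 3 × Fin 2),
    z ∈ tri v ↔ z.2 = coord v z.1 := by decide

lemma inter_card : ∀ a b : Fin 2 × Fin 2 × Fin 2,
    (tri a ∩ tri b).card = agree a b := by decide

set_option maxRecDepth 100000 in
set_option maxHeartbeats 2000000 in
lemma core : ∀ a b c d : Fin 2 × Fin 2 × Fin 2,
    (∀ p q : Fin 3, p ≠ q → ∀ x y : Fin 2,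
      ∃ i : Fin 4, coord (![a, b, c, d] i) p = x ∧ coord (![a, b, c, d] i) q = y) →
    (∀ i j : Fin 4, i ≠ j → agree (![a, b, c, d] i) (![a, b, c, d] j) ≤ 1) →
    ∀ i j : Fin 4, i ≠ j → agree (![a, b, c, d] i) (![a, b, c, d] j) = 1 := by decide

lemma vec_eq (g : Fin 4 → Fin 2 × Fin 2 × Fin 2) : ![g 0, g 1, g 2, g 3] = g := by
  funext i; fin_cases i <;> rfl

/-- In any partition of the edge set of `K_{2,2,2}` into four triangles, every two
distinct triangles of the partition share exactly one vertex. -/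
theorem K222_partition_triangles_share_one_vertex
    (T : Fin 4 → Finset (Fin 3 × Fin 2))
    (hT : ∀ i, IsTriangle (T i))
    (hdisj : ∀ i j, i ≠ j → Disjoint (triEdges (T i)) (triEdges (T j)))
    (hcover : (⋃ i, triEdges (T i)) = K222.edgeSet) :
    ∀ i j, i ≠ j → (T i ∩ T j).card = 1 := by
  choose g hg using fun i => classify (T i) (hT i)
  -- cover hypothesis in combinatorial form
  have hcov : ∀ p q : Fin 3, p ≠ q → ∀ x y : Fin 2,
      ∃ i : Fin 4, coord (g i) p = x ∧ coord (g i) q = y := by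
    intro p q hpq x y
    have hmem : s(((p, x) : Fin 3 × Fin 2), (q, y)) ∈ ⋃ i, triEdges (T i) := by
      rw [hcover]; exact hpq
    obtain ⟨S, ⟨i, rfl⟩, hS⟩ := hmem
    obtain ⟨u, hu, w, hw, huw, heq⟩ := hS
    rw [hg i] at hu hw
    rcases Sym2.eq_iff.mp heq with ⟨h1, h2⟩ | ⟨h1, h2⟩
    · rw [← h1] at hu; rw [← h2] at hw
      exact ⟨i, ((mem_tri (g i) (p, x)).mp hu).symm, ((mem_tri (g i) (q, y)).mp hw).symm⟩
    · rw [← h2] at hu; rw [← h1] at hw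
      exact ⟨i, ((mem_tri (g i) (p, x)).mp hw).symm, ((mem_tri (g i) (q, y)).mp hu).symm⟩
  -- edge-disjointness gives vertex intersections of size ≤ 1
  have hle : ∀ i j : Fin 4, i ≠ j → agree (g i) (g j) ≤ 1 := by
    intro i j hij
    rw [← inter_card]
    by_contra h
    obtain ⟨u, hu, w, hw, huw⟩ := Finset.one_lt_card.mp (lt_of_not_ge h)
    rw [← hg i, ← hg j] at hu hw
    obtain ⟨hui, huj⟩ := Finset.mem_inter.mp hu
    obtain ⟨hwi, hwj⟩ := Finset.mem_inter.mp hw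
    have hei : s(u, w) ∈ triEdges (T i) := ⟨u, hui, w, hwi, huw, rfl⟩
    have hej : s(u, w) ∈ triEdges (T j) := ⟨u, huj, w, hwj, huw, rfl⟩
    exact Set.disjoint_left.mp (hdisj i j hij) hei hej
  have key := core (g 0) (g 1) (g 2) (g 3)
  rw [vec_eq g] at key
  intro i j hij
  rw [hg i, hg j, inter_card]
  exact key hcov hle i j hij
end

section
/- In any partition of the edge set of K_{2,2,2} into four triangles, the union of the vertex sets of any two distinct triangles of the partition has exactly five elements; in particular, no two triangles of the partition together cover all six vertices of K_{2,2,2}. -/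
/-- Finset version of `triEdges`. -/
def E (s : Finset (Fin 3 × Fin 2)) : Finset (Sym2 (Fin 3 × Fin 2)) :=
  s.sym2.filter fun e => ¬ e.IsDiag

lemma triEdges_eq_coe (s : Finset (Fin 3 × Fin 2)) : triEdges s = ↑(E s) := by
  ext e
  induction e using Sym2.ind with
  | _ a b =>
    simp only [triEdges, E, Set.mem_setOf_eq, Finset.coe_filter, Finset.mk_mem_sym2_iff,
      Sym2.mk_isDiag_iff, Set.mem_setOf_eq]
    constructor
    · rintro ⟨x, hx, y, hy, hxy, h⟩
      rw [Sym2.eq_iff] at h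
      rcases h with ⟨rfl, rfl⟩ | ⟨rfl, rfl⟩
      · exact ⟨⟨hx, hy⟩, hxy⟩
      · exact ⟨⟨hy, hx⟩, fun h => hxy h.symm⟩
    · rintro ⟨⟨ha, hb⟩, hab⟩
      exact ⟨a, ha, b, hb, hab, rfl⟩

set_option maxRecDepth 10000 in
set_option synthInstance.maxSize 2000 in
set_option synthInstance.maxHeartbeats 1000000 in
set_option maxHeartbeats 4000000 in
lemma key : ∀ s0 ∈ (Finset.univ.filter IsTriangle : Finset (Finset (Fin 3 × Fin 2))),
    ∀ s1 ∈ (Finset.univ.filter IsTriangle : Finset (Finset (Fin 3 × Fin 2))),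
    ∀ s2 ∈ (Finset.univ.filter IsTriangle : Finset (Finset (Fin 3 × Fin 2))),
    ∀ s3 ∈ (Finset.univ.filter IsTriangle : Finset (Finset (Fin 3 × Fin 2))),
    Disjoint (E s0) (E s1) → Disjoint (E s0) (E s2) → Disjoint (E s0) (E s3) →
    Disjoint (E s1) (E s2) → Disjoint (E s1) (E s3) → Disjoint (E s2) (E s3) →
    E s0 ∪ E s1 ∪ E s2 ∪ E s3 = K222.edgeFinset →
    ((s0 ∪ s1).card = 5 ∧ s0 ∪ s1 ≠ Finset.univ) ∧
    ((s0 ∪ s2).card = 5 ∧ s0 ∪ s2 ≠ Finset.univ) ∧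
    ((s0 ∪ s3).card = 5 ∧ s0 ∪ s3 ≠ Finset.univ) ∧
    ((s1 ∪ s2).card = 5 ∧ s1 ∪ s2 ≠ Finset.univ) ∧
    ((s1 ∪ s3).card = 5 ∧ s1 ∪ s3 ≠ Finset.univ) ∧
    ((s2 ∪ s3).card = 5 ∧ s2 ∪ s3 ≠ Finset.univ) := by decide

set_option maxRecDepth 10000 in
set_option maxHeartbeats 2000000 in
/-- In any partition of the edge set of `K_{2,2,2}` into four triangles, the vertex
sets of any two distinct triangles together cover exactly five vertices; in
particular they never cover all six vertices. -/
theorem K222_partition_two_triangles_cover_five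
    (T : Fin 4 → Finset (Fin 3 × Fin 2))
    (hT : ∀ i, IsTriangle (T i))
    (hdisj : ∀ i j, i ≠ j → Disjoint (triEdges (T i)) (triEdges (T j)))
    (hcover : (⋃ i, triEdges (T i)) = K222.edgeSet) :
    ∀ i j, i ≠ j → (T i ∪ T j).card = 5 ∧ T i ∪ T j ≠ Finset.univ := by
  have hmem : ∀ i, T i ∈ (Finset.univ.filter IsTriangle : Finset (Finset (Fin 3 × Fin 2))) :=
    fun i => Finset.mem_filter.mpr ⟨Finset.mem_univ _, hT i⟩
  have hd : ∀ i j, i ≠ j → Disjoint (E (T i)) (E (T j)) := by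
    intro i j hij
    have := hdisj i j hij
    rw [triEdges_eq_coe, triEdges_eq_coe, Finset.disjoint_coe] at this
    exact this
  have hcov : E (T 0) ∪ E (T 1) ∪ E (T 2) ∪ E (T 3) = K222.edgeFinset := by
    rw [← Finset.coe_inj, SimpleGraph.coe_edgeFinset, ← hcover]
    ext e
    simp only [Finset.coe_union, Set.mem_union, Set.mem_iUnion]
    constructor
    · rintro (((h | h) | h) | h)
      exacts [⟨0, by rw [triEdges_eq_coe]; exact h⟩, ⟨1, by rw [triEdges_eq_coe]; exact h⟩,
        ⟨2, by rw [triEdges_eq_coe]; exact h⟩, ⟨3, by rw [triEdges_eq_coe]; exact h⟩]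
    · rintro ⟨i, h⟩
      rw [triEdges_eq_coe] at h
      fin_cases i
      · exact Or.inl (Or.inl (Or.inl h))
      · exact Or.inl (Or.inl (Or.inr h))
      · exact Or.inl (Or.inr h)
      · exact Or.inr h
  have K := key (T 0) (hmem 0) (T 1) (hmem 1) (T 2) (hmem 2) (T 3) (hmem 3)
    (hd 0 1 (by decide)) (hd 0 2 (by decide)) (hd 0 3 (by decide))
    (hd 1 2 (by decide)) (hd 1 3 (by decide)) (hd 2 3 (by decide)) hcov
  obtain ⟨h01, h02, h03, h12, h13, h23⟩ := K
  intro i j hij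
  fin_cases i <;> fin_cases j <;> simp_all <;>
    first
      | exact h01 | exact h02 | exact h03 | exact h12 | exact h13 | exact h23
      | (rw [Finset.union_comm]; first | exact h01 | exact h02 | exact h03 | exact h12 | exact h13 | exact h23)
end

section
/- Let G be a simple graph on vertex set V with a proper coloring c : V → ZMod 3, and let k ≥ 1 be a natural number. Form the k-blowup of G on V × ZMod k, and for each pair (i,j) ∈ ZMod k × ZMod k define the set S_{i,j} = { (v,l) : (c v = 0 and l = i) or (c v = 1 and l = j) or (c v = 2 and l = -(i+j)) }. Then for every edge of the k-blowup of G there is exactly one pair (i,j) such that both endpoints of the edge belong to S_{i,j}. -/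
/-- The `k`-blowup of a simple graph `G` on `V`, here taken on `V × ZMod k`:
`(u,i)` and `(v,j)` are adjacent iff `u` and `v` are adjacent in `G`. -/
def zblowup {V : Type*} (G : SimpleGraph V) (k : ℕ) : SimpleGraph (V × ZMod k) :=
  G.comap Prod.fst

/-- Membership of a blowup vertex `p = (v, l)` in the set `S_{i,j}`:
`(v,l) ∈ S_{i,j}` iff (`c v = 0` and `l = i`) or (`c v = 1` and `l = j`) or
(`c v = 2` and `l = -(i+j)`). -/
def memS {V : Type*} {k : ℕ} (c : V → ZMod 3) (i j : ZMod k) (p : V × ZMod k) : Prop :=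
  (c p.1 = 0 ∧ p.2 = i) ∨ (c p.1 = 1 ∧ p.2 = j) ∨ (c p.1 = 2 ∧ p.2 = -(i + j))

/-!
`S_{i,j}` picks, in colour class `a`, the copy indexed by the `a`-th coordinate of the zero-sum
triple `(i, j, -(i + j))`. The endpoints of an edge have distinct colours, and any two coordinates
of a zero-sum triple determine it, hence determine `(i, j)`.
-/

def zeroSumTriple {A : Type*} [AddCommGroup A] (i j : A) : Fin 3 → A := ![i, j, -(i + j)]

theorem existsUnique_zeroSumTriple_eq {A : Type*} [AddCommGroup A] {a b : Fin 3} (hab : a ≠ b)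
    (x y : A) : ∃! ij : A × A, zeroSumTriple ij.1 ij.2 a = x ∧ zeroSumTriple ij.1 ij.2 b = y := by
  fin_cases a <;> fin_cases b <;> simp only [zeroSumTriple] at hab ⊢ <;> simp at hab
  · exact ⟨(x, y), by simp, by rintro ⟨i, j⟩ ⟨rfl, rfl⟩; simp⟩
  · exact ⟨(x, -x - y), by simp, by rintro ⟨i, j⟩ ⟨rfl, rfl⟩; simp⟩
  · exact ⟨(y, x), by simp, by rintro ⟨i, j⟩ ⟨rfl, rfl⟩; simp⟩
  · exact ⟨(-x - y, x), by simp, by rintro ⟨i, j⟩ ⟨rfl, rfl⟩; simp⟩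
  · exact ⟨(y, -x - y), by simp, by rintro ⟨i, j⟩ ⟨rfl, rfl⟩; simp⟩
  · exact ⟨(-x - y, y), by simp, by rintro ⟨i, j⟩ ⟨rfl, rfl⟩; simp⟩

theorem memS_iff {V : Type*} {k : ℕ} (c : V → ZMod 3) (i j : ZMod k) (p : V × ZMod k) :
    memS c i j p ↔ zeroSumTriple i j (c p.1) = p.2 := by
  unfold memS
  obtain h | h | h : c p.1 = 0 ∨ c p.1 = 1 ∨ c p.1 = 2 := by generalize c p.1 = a; decide +revert
  all_goals simp +decide [h, zeroSumTriple, eq_comm]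

theorem blowup_coloring_edge_unique_set_general {V : Type*} (G : SimpleGraph V)
    (c : V → ZMod 3) (hc : ∀ {u v : V}, G.Adj u v → c u ≠ c v)
    (k : ℕ) :
    ∀ p q : V × ZMod k, (zblowup G k).Adj p q →
      ∃! ij : ZMod k × ZMod k, memS c ij.1 ij.2 p ∧ memS c ij.1 ij.2 q := by
  intro p q hpq
  simpa only [memS_iff] using existsUnique_zeroSumTriple_eq (hc hpq) p.2 q.2

/-- If `c` is a proper 3-coloring of `G` and `k ≥ 1`, then every edge of the
`k`-blowup of `G` has both endpoints in exactly one of the `k²` sets `S_{i,j}`. -/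
theorem blowup_coloring_edge_unique_set {V : Type*} (G : SimpleGraph V)
    (c : V → ZMod 3) (hc : ∀ {u v : V}, G.Adj u v → c u ≠ c v)
    (k : ℕ) (hk : 1 ≤ k) :
    ∀ p q : V × ZMod k, (zblowup G k).Adj p q →
      ∃! ij : ZMod k × ZMod k, memS c ij.1 ij.2 p ∧ memS c ij.1 ij.2 q :=
  blowup_coloring_edge_unique_set_general G c hc k
end

section
/- Let G be a simple graph on vertex set V with a proper coloring c : V → ZMod 2 (so G is bipartite), and let k ≥ 1 be a natural number. Form the k-blowup of G on V × ZMod k, and for each pair (i,j) ∈ ZMod k × ZMod k define the set S_{i,j} = { (v,l) : (c v = 0 and l = i) or (c v = 1 and l = j) }. Then (1) for every edge of the k-blowup there is exactly one pair (i,j) with both endpoints in S_{i,j}, and (2) for every s ∈ ZMod k, every vertex (v,l) of the k-blowup belongs to exactly one set S_{i,j} with i + j = s. -/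
/-- Membership of a blowup vertex `p = (v, l)` in the set `S_{i,j}` for a 2-coloring:
`(v,l) ∈ S_{i,j}` iff (`c v = 0` and `l = i`) or (`c v = 1` and `l = j`). -/
def memS2 {V : Type*} {k : ℕ} (c : V → ZMod 2) (i j : ZMod k) (p : V × ZMod k) : Prop :=
  (c p.1 = 0 ∧ p.2 = i) ∨ (c p.1 = 1 ∧ p.2 = j)

/-!
A vertex `(v, l)` of the blowup lies in `S_{i,j}` exactly when `l` equals the coordinate of
`(i, j)` selected by the color of `v`. An edge joins vertices of different colors, so its two
endpoints prescribe both coordinates of `(i, j)`; a single vertex prescribes one coordinate, and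
`i + j = s` then determines the other.
-/

theorem ZMod.two_eq_zero_or_eq_one (x : ZMod 2) : x = 0 ∨ x = 1 := by
  revert x; decide

theorem ZMod.two_eq_zero_and_eq_one_or_of_ne {x y : ZMod 2} (h : x ≠ y) :
    x = 0 ∧ y = 1 ∨ x = 1 ∧ y = 0 := by
  revert x y; decide

section memS2

variable {V : Type*} {k : ℕ} {c : V → ZMod 2} {i j : ZMod k} {p q : V × ZMod k}

theorem memS2_iff_of_color_eq_zero (h : c p.1 = 0) : memS2 c i j p ↔ p.2 = i := by
  simp [memS2, h]

theorem memS2_iff_of_color_eq_one (h : c p.1 = 1) : memS2 c i j p ↔ p.2 = j := by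
  simp [memS2, h]

theorem existsUnique_memS2_of_color_eq_zero_of_color_eq_one (hp : c p.1 = 0) (hq : c q.1 = 1) :
    ∃! ij : ZMod k × ZMod k, memS2 c ij.1 ij.2 p ∧ memS2 c ij.1 ij.2 q := by
  simp only [memS2_iff_of_color_eq_zero hp, memS2_iff_of_color_eq_one hq]
  exact ⟨(p.2, q.2), ⟨rfl, rfl⟩, fun ij h ↦ Prod.ext h.1.symm h.2.symm⟩

theorem existsUnique_memS2_of_zblowup_adj {G : SimpleGraph V}
    (hc : ∀ {u v : V}, G.Adj u v → c u ≠ c v) (hpq : (zblowup G k).Adj p q) :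
    ∃! ij : ZMod k × ZMod k, memS2 c ij.1 ij.2 p ∧ memS2 c ij.1 ij.2 q := by
  rcases ZMod.two_eq_zero_and_eq_one_or_of_ne (hc hpq) with ⟨hp, hq⟩ | ⟨hp, hq⟩
  · exact existsUnique_memS2_of_color_eq_zero_of_color_eq_one hp hq
  · simpa only [and_comm] using existsUnique_memS2_of_color_eq_zero_of_color_eq_one hq hp

theorem existsUnique_add_eq_and_memS2 (c : V → ZMod 2) (s : ZMod k) (p : V × ZMod k) :
    ∃! ij : ZMod k × ZMod k, ij.1 + ij.2 = s ∧ memS2 c ij.1 ij.2 p := by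
  rcases ZMod.two_eq_zero_or_eq_one (c p.1) with hp | hp
  · simp only [memS2_iff_of_color_eq_zero hp]
    refine ⟨(p.2, s - p.2), ⟨add_sub_cancel _ _, rfl⟩, fun ⟨i, j⟩ ⟨hs, hi⟩ ↦ ?_⟩
    subst hi
    exact Prod.ext rfl (eq_sub_of_add_eq' hs)
  · simp only [memS2_iff_of_color_eq_one hp]
    refine ⟨(s - p.2, p.2), ⟨sub_add_cancel _ _, rfl⟩, fun ⟨i, j⟩ ⟨hs, hj⟩ ↦ ?_⟩
    subst hj
    exact Prod.ext (eq_sub_of_add_eq hs) rfl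

end memS2

theorem blowup_bipartite_coloring_groups_general {V : Type*} (G : SimpleGraph V)
    (c : V → ZMod 2) (hc : ∀ {u v : V}, G.Adj u v → c u ≠ c v)
    (k : ℕ) :
    (∀ p q : V × ZMod k, (zblowup G k).Adj p q →
        ∃! ij : ZMod k × ZMod k, memS2 c ij.1 ij.2 p ∧ memS2 c ij.1 ij.2 q) ∧
    (∀ s : ZMod k, ∀ p : V × ZMod k,
        ∃! ij : ZMod k × ZMod k, ij.1 + ij.2 = s ∧ memS2 c ij.1 ij.2 p) :=
  ⟨fun _ _ hpq ↦ existsUnique_memS2_of_zblowup_adj hc hpq, existsUnique_add_eq_and_memS2 c⟩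

/-- If `c` is a proper 2-coloring of `G` (so `G` is bipartite) and `k ≥ 1`, then
(1) every edge of the `k`-blowup has both endpoints in exactly one set `S_{i,j}`, and
(2) for every `s : ZMod k`, every vertex of the `k`-blowup belongs to exactly one set
`S_{i,j}` with `i + j = s`. -/
theorem blowup_bipartite_coloring_groups {V : Type*} (G : SimpleGraph V)
    (c : V → ZMod 2) (hc : ∀ {u v : V}, G.Adj u v → c u ≠ c v)
    (k : ℕ) (hk : 1 ≤ k) :
    (∀ p q : V × ZMod k, (zblowup G k).Adj p q →
        ∃! ij : ZMod k × ZMod k, memS2 c ij.1 ij.2 p ∧ memS2 c ij.1 ij.2 q) ∧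
    (∀ s : ZMod k, ∀ p : V × ZMod k,
        ∃! ij : ZMod k × ZMod k, ij.1 + ij.2 = s ∧ memS2 c ij.1 ij.2 p) :=
  blowup_bipartite_coloring_groups_general G c hc k
end
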